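/- arXiv:1712.04253 — 4 statements merged into one kernel-verified Lean document; each statement's English description precedes it below -/
import Mathlib

section
/- For any real sequence x = (x_0, x_1, ...) in l^2 and any a > 1/2, the double sum over i,j ≥ 0 of |x_i||x_j|/(i+j+a) is at most π·(sum of x_k^2). -/
/-!
For `g θ = ∑ₘ cₘ e^{2imθ}` one has `∫₀^π g(θ)² e^{iθ} dθ = 2i ∑_{j,k} c_j c_k / (2j + 2k + 1)`,
because `e^{i(2n+1)θ}` integrates to `2i/(2n+1)` over `[0, π]`, while `∫₀^π |g|² = π ∑ |cₘ|²` since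
the `e^{2imθ}` are orthogonal there. Bounding the first integral by the second gives the finite
inequality for `a = 1/2`; larger `a` only shrinks the nonnegative terms, and bounded finite partial
sums of nonnegative terms bound the double series.
-/

open Real
open scoped Complex
open Complex (I)

namespace Ingham

theorem tsum_tsum_le_of_sum_sum_le {α : Type*} {f : α → α → ℝ} (hf : ∀ i j, 0 ≤ f i j) {B : ℝ}
    (h : ∀ s : Finset α, ∑ i ∈ s, ∑ j ∈ s, f i j ≤ B) : ∑' i, ∑' j, f i j ≤ B := by
  classical
  have hbound (u : Finset (α × α)) : ∑ p ∈ u, f p.1 p.2 ≤ B := by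
    let s := u.image Prod.fst ∪ u.image Prod.snd
    have hsub : u ⊆ s ×ˢ s := fun p hp => Finset.mem_product.2
      ⟨Finset.mem_union_left _ (Finset.mem_image_of_mem _ hp),
        Finset.mem_union_right _ (Finset.mem_image_of_mem _ hp)⟩
    calc ∑ p ∈ u, f p.1 p.2 ≤ ∑ p ∈ s ×ˢ s, f p.1 p.2 :=
          Finset.sum_le_sum_of_subset_of_nonneg hsub fun p _ _ => hf p.1 p.2
      _ = ∑ i ∈ s, ∑ j ∈ s, f i j := Finset.sum_product s s _
      _ ≤ B := h s
  have hsum : Summable fun p : α × α => f p.1 p.2 :=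
    summable_of_sum_le (fun p => hf p.1 p.2) hbound
  rw [← hsum.tsum_prod' hsum.prod_factor]
  exact hsum.tsum_le_of_sum_le hbound

theorem integral_exp_two_int_mul_I (n : ℤ) :
    ∫ θ in (0:ℝ)..π, cexp (2 * n * I * θ) = if n = 0 then (π : ℂ) else 0 := by
  split_ifs with hn
  · simp [hn]
  have hc : 2 * n * I ≠ 0 := by simp [hn, Complex.I_ne_zero]
  have hperiod : cexp (2 * n * I * π) = 1 := by
    rw [← Complex.exp_int_mul_two_pi_mul_I n]; ring_nf
  rw [integral_exp_mul_complex hc]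
  simp [hperiod]

theorem integral_exp_odd_int_mul_I (n : ℤ) :
    ∫ θ in (0:ℝ)..π, cexp ((2 * n + 1) * I * θ) = 2 * I / (2 * n + 1) := by
  have hodd : (2 * n + 1 : ℂ) ≠ 0 := by exact_mod_cast (show 2 * n + 1 ≠ 0 by omega)
  have hc : (2 * n + 1) * I ≠ 0 := mul_ne_zero hodd Complex.I_ne_zero
  have hhalf : cexp ((2 * n + 1) * I * π) = -1 := by
    rw [show (2 * n + 1) * I * π = n * (2 * π * I) + π * I by ring, Complex.exp_add,
      Complex.exp_int_mul_two_pi_mul_I, Complex.exp_pi_mul_I, one_mul]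
  rw [integral_exp_mul_complex hc, hhalf, Complex.ofReal_zero, mul_zero, Complex.exp_zero,
    div_eq_div_iff hc hodd]
  linear_combination -2 * (2 * n + 1) * Complex.I_mul_I

theorem integral_sum_sum {ι κ : Type*} (s : Finset ι) (t : Finset κ) {F : ι → κ → ℝ → ℂ}
    (hF : ∀ j k, Continuous (F j k)) (a b : ℝ) :
    ∫ θ in a..b, ∑ j ∈ s, ∑ k ∈ t, F j k θ = ∑ j ∈ s, ∑ k ∈ t, ∫ θ in a..b, F j k θ := by
  rw [intervalIntegral.integral_finsetSum fun j _ =>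
    (continuous_finsetSum t fun k _ => hF j k).intervalIntegrable a b]
  exact Finset.sum_congr rfl fun j _ => intervalIntegral.integral_finsetSum fun k _ =>
    (hF j k).intervalIntegrable a b

noncomputable def evenTrigPoly (s : Finset ℕ) (c : ℕ → ℂ) (θ : ℝ) : ℂ :=
  ∑ m ∈ s, c m * cexp (2 * m * I * θ)

section

variable (s : Finset ℕ) (c : ℕ → ℂ)

theorem evenTrigPoly_sq_mul_exp (θ : ℝ) :
    evenTrigPoly s c θ ^ 2 * cexp (I * θ) =
      ∑ j ∈ s, ∑ k ∈ s, c j * c k * cexp ((2 * ((j + k : ℤ) : ℂ) + 1) * I * θ) := by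
  rw [evenTrigPoly, sq, Finset.sum_mul_sum]
  simp only [Finset.sum_mul]
  refine Finset.sum_congr rfl fun j _ => Finset.sum_congr rfl fun k _ => ?_
  rw [show (2 * ((j + k : ℤ) : ℂ) + 1) * I * θ = 2 * j * I * θ + 2 * k * I * θ + I * θ by
    push_cast; ring, Complex.exp_add, Complex.exp_add]
  ring

theorem norm_evenTrigPoly_sq (θ : ℝ) :
    (‖evenTrigPoly s c θ‖ ^ 2 : ℂ) =
      ∑ j ∈ s, ∑ k ∈ s, c j * (starRingEnd ℂ) (c k) * cexp (2 * ((j - k : ℤ) : ℂ) * I * θ) := by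
  rw [← Complex.mul_conj', evenTrigPoly, map_sum, Finset.sum_mul_sum]
  refine Finset.sum_congr rfl fun j _ => Finset.sum_congr rfl fun k _ => ?_
  rw [map_mul, ← Complex.exp_conj,
    show 2 * ((j - k : ℤ) : ℂ) * I * θ = 2 * j * I * θ + (starRingEnd ℂ) (2 * k * I * θ) by
      simp [Complex.conj_ofReal, map_ofNat]; ring, Complex.exp_add]
  ring

theorem integral_norm_evenTrigPoly_sq :
    ∫ θ in (0:ℝ)..π, ‖evenTrigPoly s c θ‖ ^ 2 = π * ∑ m ∈ s, ‖c m‖ ^ 2 := by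
  apply Complex.ofReal_injective
  rw [← intervalIntegral.integral_ofReal]
  push_cast
  simp_rw [norm_evenTrigPoly_sq]
  rw [integral_sum_sum s s (fun j k => by fun_prop)]
  simp_rw [intervalIntegral.integral_const_mul, integral_exp_two_int_mul_I, sub_eq_zero,
    Nat.cast_inj, mul_ite, mul_zero, Finset.sum_ite_eq, Finset.mul_sum]
  refine Finset.sum_congr rfl fun m hm => ?_
  rw [if_pos hm, Complex.mul_conj', mul_comm]

theorem integral_evenTrigPoly_sq_mul_exp :
    ∫ θ in (0:ℝ)..π, evenTrigPoly s c θ ^ 2 * cexp (I * θ) =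
      2 * I * ∑ j ∈ s, ∑ k ∈ s, c j * c k / (2 * j + 2 * k + 1) := by
  simp_rw [evenTrigPoly_sq_mul_exp]
  rw [integral_sum_sum s s (fun j k => by fun_prop), Finset.mul_sum]
  refine Finset.sum_congr rfl fun j _ => ?_
  rw [Finset.mul_sum]
  refine Finset.sum_congr rfl fun k _ => ?_
  rw [intervalIntegral.integral_const_mul, integral_exp_odd_int_mul_I]
  push_cast
  ring

theorem norm_sum_sum_mul_div_le :
    ‖∑ j ∈ s, ∑ k ∈ s, c j * c k / (j + k + 1 / 2)‖ ≤ π * ∑ m ∈ s, ‖c m‖ ^ 2 := by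
  have hform : ∑ j ∈ s, ∑ k ∈ s, c j * c k / (j + k + 1 / 2) =
      -I * ∫ θ in (0:ℝ)..π, evenTrigPoly s c θ ^ 2 * cexp (I * θ) := by
    have hI : -I * (2 * I) = 2 := by linear_combination (-2 : ℂ) * Complex.I_mul_I
    rw [integral_evenTrigPoly_sq_mul_exp, ← mul_assoc, hI, Finset.mul_sum]
    refine Finset.sum_congr rfl fun j _ => ?_
    rw [Finset.mul_sum]
    refine Finset.sum_congr rfl fun k _ => ?_
    rw [show (j + k + 1 / 2 : ℂ) = (2 * j + 2 * k + 1) / 2 by ring, div_div_eq_mul_div,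
      mul_div_assoc', mul_comm]
  calc ‖∑ j ∈ s, ∑ k ∈ s, c j * c k / (j + k + 1 / 2)‖
      = ‖∫ θ in (0:ℝ)..π, evenTrigPoly s c θ ^ 2 * cexp (I * θ)‖ := by
        rw [hform, norm_mul, norm_neg, Complex.norm_I, one_mul]
    _ ≤ ∫ θ in (0:ℝ)..π, ‖evenTrigPoly s c θ ^ 2 * cexp (I * θ)‖ :=
        intervalIntegral.norm_integral_le_integral_norm pi_pos.le
    _ = ∫ θ in (0:ℝ)..π, ‖evenTrigPoly s c θ‖ ^ 2 := by
        simp_rw [norm_mul, norm_pow, Complex.norm_exp_I_mul_ofReal, mul_one]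
    _ = π * ∑ m ∈ s, ‖c m‖ ^ 2 := integral_norm_evenTrigPoly_sq s c

theorem sum_sum_mul_div_le (y : ℕ → ℝ) :
    ∑ j ∈ s, ∑ k ∈ s, y j * y k / (j + k + 1 / 2) ≤ π * ∑ m ∈ s, y m ^ 2 := by
  have hcast : ((∑ j ∈ s, ∑ k ∈ s, y j * y k / (j + k + 1 / 2) : ℝ) : ℂ) =
      ∑ j ∈ s, ∑ k ∈ s, (y j : ℂ) * y k / (j + k + 1 / 2) := by
    push_cast; rfl
  have h := norm_sum_sum_mul_div_le s fun m => (y m : ℂ)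
  simp only [← hcast, Complex.norm_real, Real.norm_eq_abs, sq_abs] at h
  exact le_of_abs_le h

end

end Ingham

theorem ingham_inequality_large (x : ℕ → ℝ) (hx : Summable fun k => (x k) ^ 2)
    (a : ℝ) (ha : 1 / 2 < a) :
    ∑' i : ℕ, ∑' j : ℕ, |x i| * |x j| / ((i : ℝ) + (j : ℝ) + a) ≤
      π * ∑' k : ℕ, (x k) ^ 2 := by
  have ha0 : 0 < a := by linarith
  refine Ingham.tsum_tsum_le_of_sum_sum_le (fun i j => by positivity) fun s => ?_
  calc ∑ i ∈ s, ∑ j ∈ s, |x i| * |x j| / ((i : ℝ) + j + a)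
      ≤ ∑ i ∈ s, ∑ j ∈ s, |x i| * |x j| / ((i : ℝ) + j + 1 / 2) := by
        gcongr
    _ ≤ π * ∑ k ∈ s, |x k| ^ 2 := Ingham.sum_sum_mul_div_le s fun k => |x k|
    _ ≤ π * ∑' k, x k ^ 2 := by
        simp_rw [sq_abs]
        gcongr
        exact hx.sum_le_tsum s fun k _ => sq_nonneg _
end

section
/- For any real sequence x = (x_0, x_1, ...) in l^2 and any a with 0 < a ≤ 1/2, the double sum over i,j ≥ 0 of |x_i||x_j|/(i+j+a) is at most (π/sin(aπ))·(sum of x_k^2). -/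
/-!
Schur test with the weights `p n = Γ(n + a) / n!`, the Taylor coefficients of
`Γ(a) (1 - t)^(-a)`. Writing `1 / (m + n + a)` as `∫₀¹ t^(m + n + a - 1) dt` and summing the
binomial series under the integral gives
`∑ₙ p n / (m + n + a) = Γ(a) B(m + a, 1 - a) = Γ(a) Γ(1 - a) p m = π / sin(aπ) · p m`,
so `p` is a positive eigenvector of the kernel `1 / (i + j + a)`; the AM-GM inequality
`2 |xᵢ| |xⱼ| ≤ xᵢ² pⱼ / pᵢ + xⱼ² pᵢ / pⱼ` then turns this row bound into the quadratic form bound.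
-/

open Real MeasureTheory Set
open scoped ENNReal NNReal

lemma NNReal.two_mul_le_sq_mul_add_sq_mul_inv (u v : ℝ≥0) {r : ℝ≥0} (hr : r ≠ 0) :
    2 * (u * v) ≤ u ^ 2 * r + v ^ 2 * r⁻¹ := by
  rw [← NNReal.coe_le_coe]
  push_cast
  have hr' : (r : ℝ) ≠ 0 := by exact_mod_cast hr
  have hsq : (u : ℝ) ^ 2 * r + v ^ 2 * (r : ℝ)⁻¹ - 2 * (u * v) =
      ((u : ℝ) * r - v) ^ 2 * (r : ℝ)⁻¹ := by
    field_simp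
    ring
  rw [← sub_nonneg, hsq]
  positivity

theorem ENNReal.schur_test {ι : Type*} (K : ι → ι → ℝ≥0∞) (hK : ∀ i j, K i j = K j i)
    (p : ι → ℝ≥0) (hp : ∀ i, p i ≠ 0) {c : ℝ≥0∞} (hrow : ∀ i, ∑' j, K i j * p j ≤ c * p i)
    (u : ι → ℝ≥0) :
    ∑' i, ∑' j, K i j * (u i * u j) ≤ c * ∑' i, (u i : ℝ≥0∞) ^ 2 := by
  set T : ι → ι → ℝ≥0∞ := fun i j => K i j * ↑(u i ^ 2 * (p j / p i))
  have hpair : ∀ i j, 2 * (K i j * (u i * u j)) ≤ T i j + T j i := by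
    intro i j
    have h := NNReal.two_mul_le_sq_mul_add_sq_mul_inv (u i) (u j) (div_ne_zero (hp j) (hp i))
    rw [inv_div] at h
    simp only [T, hK j i, ← mul_add, mul_left_comm (2 : ℝ≥0∞) (K i j)]
    gcongr
    exact_mod_cast h
  have hT : ∀ i, ∑' j, T i j ≤ c * (u i : ℝ≥0∞) ^ 2 := by
    intro i
    calc ∑' j, T i j = ↑(u i ^ 2 / p i) * ∑' j, K i j * p j := by
          rw [← ENNReal.tsum_mul_left]
          congr 1 with j
          simp only [T]
          rw [← mul_comm_div, ENNReal.coe_mul]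
          ring
      _ ≤ ↑(u i ^ 2 / p i) * (c * p i) := by gcongr; exact hrow i
      _ = c * (u i : ℝ≥0∞) ^ 2 := by
          rw [mul_left_comm, ← ENNReal.coe_mul, div_mul_cancel₀ _ (hp i)]
          push_cast
          rfl
  have h2 : 2 * ∑' i, ∑' j, K i j * (u i * u j) ≤ 2 * (c * ∑' i, (u i : ℝ≥0∞) ^ 2) :=
    calc 2 * ∑' i, ∑' j, K i j * (u i * u j)
        = ∑' i, ∑' j, 2 * (K i j * (u i * u j)) := by simp only [ENNReal.tsum_mul_left]
      _ ≤ ∑' i, ∑' j, (T i j + T j i) :=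
          ENNReal.tsum_le_tsum fun i => ENNReal.tsum_le_tsum (hpair i)
      _ = 2 * ∑' i, ∑' j, T i j := by
          simp only [ENNReal.tsum_add]
          rw [ENNReal.tsum_comm (f := fun i j => T j i), two_mul]
      _ ≤ 2 * (c * ∑' i, (u i : ℝ≥0∞) ^ 2) := by
          gcongr
          rw [← ENNReal.tsum_mul_left]
          exact ENNReal.tsum_le_tsum hT
  exact (ENNReal.mul_le_mul_iff_right two_ne_zero ENNReal.ofNat_ne_top).mp h2

lemma tsum_tsum_le_of_ofReal_le {ι κ : Type*} {f : ι → κ → ℝ} (hf : ∀ i j, 0 ≤ f i j) {B : ℝ}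
    (hB : 0 ≤ B) (h : ∑' i, ∑' j, ENNReal.ofReal (f i j) ≤ ENNReal.ofReal B) :
    ∑' i, ∑' j, f i j ≤ B := by
  have hfin : ∀ i, ∑' j, ENNReal.ofReal (f i j) ≠ ∞ := fun i =>
    ne_top_of_le_ne_top ENNReal.ofReal_ne_top ((ENNReal.le_tsum i).trans h)
  calc ∑' i, ∑' j, f i j = ∑' i, (∑' j, ENNReal.ofReal (f i j)).toReal := by
        congr 1 with i
        rw [ENNReal.tsum_toReal_eq fun _ => ENNReal.ofReal_ne_top]
        simp only [ENNReal.toReal_ofReal (hf i _)]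
    _ = (∑' i, ∑' j, ENNReal.ofReal (f i j)).toReal := (ENNReal.tsum_toReal_eq hfin).symm
    _ ≤ (ENNReal.ofReal B).toReal := ENNReal.toReal_mono ENNReal.ofReal_ne_top h
    _ = B := ENNReal.toReal_ofReal hB

lemma Complex.ring_choose_add_sub_one_eq_Gamma_div {a : ℂ} (ha : ∀ k : ℕ, a ≠ -k) (n : ℕ) :
    Ring.choose (a + n - 1) n = Gamma (n + a) / n.factorial / Gamma a := by
  rw [Ring.choose_eq_smul, Polynomial.descPochhammer_smeval_eq_ascPochhammer,
    Polynomial.ascPochhammer_smeval_eq_eval, show a + n - 1 - n + 1 = a by ring,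
    ← Gamma_add_nat_div_Gamma_eq a ha, smul_eq_mul, add_comm]
  ring

lemma ProbabilityTheory.beta_one_right {α : ℝ} (hα : 0 < α) : beta α 1 = 1 / α := by
  rw [beta, Gamma_one, mul_one, Gamma_add_one hα.ne']
  field_simp [(Gamma_pos_of_pos hα).ne']

lemma lintegral_rpow_mul_one_sub_rpow {α β : ℝ} (hα : 0 < α) (hβ : 0 < β) :
    ∫⁻ t in Ioo 0 1, ENNReal.ofReal (t ^ (α - 1) * (1 - t) ^ (β - 1)) =
      ENNReal.ofReal (ProbabilityTheory.beta α β) := by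
  have hB := ProbabilityTheory.beta_pos hα hβ
  have h := ProbabilityTheory.lintegral_betaPDF_eq_one hα hβ
  simp_rw [ProbabilityTheory.lintegral_betaPDF, mul_assoc,
    ENNReal.ofReal_mul (one_div_pos.mpr hB).le] at h
  rw [lintegral_const_mul' _ _ ENNReal.ofReal_ne_top, mul_comm] at h
  rw [ENNReal.eq_inv_of_mul_eq_one_left h, one_div, ENNReal.ofReal_inv_of_pos hB, inv_inv]

lemma ofReal_div_eq_lintegral_rpow {a w : ℝ} (ha : 0 < a) (hw : 0 ≤ w) (k : ℕ) :
    ENNReal.ofReal (w / (k + a)) =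
      ∫⁻ t in Ioo 0 1, ENNReal.ofReal (t ^ (a - 1) * (w * t ^ k)) := by
  have hka : 0 < k + a := by positivity
  calc ENNReal.ofReal (w / (k + a))
      = ENNReal.ofReal w *
          ∫⁻ t in Ioo 0 1, ENNReal.ofReal (t ^ (k + a - 1) * (1 - t) ^ (1 - 1 : ℝ)) := by
        rw [lintegral_rpow_mul_one_sub_rpow hka one_pos, ProbabilityTheory.beta_one_right hka,
          ← ENNReal.ofReal_mul hw, mul_one_div]
    _ = ∫⁻ t in Ioo 0 1, ENNReal.ofReal (t ^ (a - 1) * (w * t ^ k)) := by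
        rw [← lintegral_const_mul' _ _ ENNReal.ofReal_ne_top]
        refine setLIntegral_congr_fun measurableSet_Ioo fun t ht => ?_
        rw [← ENNReal.ofReal_mul hw, sub_self, rpow_zero, mul_one, add_sub_assoc,
          rpow_add ht.1, rpow_natCast]
        ring_nf

noncomputable def inghamWeight (a : ℝ) (n : ℕ) : ℝ := Gamma (n + a) / n.factorial

lemma inghamWeight_pos {a : ℝ} (ha : 0 < a) (n : ℕ) : 0 < inghamWeight a n :=
  div_pos (Gamma_pos_of_pos (by positivity)) (by positivity)

lemma hasSum_inghamWeight_mul_pow {a t : ℝ} (ha : ∀ k : ℕ, a ≠ -k) (ht : |t| < 1) :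
    HasSum (fun n => inghamWeight a n * t ^ n) (Gamma a * (1 - t) ^ (-a)) := by
  have hseries := (Complex.one_div_one_sub_cpow_hasFPowerSeriesOnBall_zero (a : ℂ)).hasSum
    (y := (t : ℂ)) (by simpa [enorm_eq_nnnorm, ← NNReal.coe_lt_coe] using ht)
  have ha' : ∀ k : ℕ, (a : ℂ) ≠ -k := fun k h => ha k (by exact_mod_cast h)
  simp only [FormalMultilinearSeries.ofScalars_apply_eq, smul_eq_mul, zero_add,
    Complex.ring_choose_add_sub_one_eq_Gamma_div ha'] at hseries
  have hreal : HasSum (fun n => inghamWeight a n / Gamma a * t ^ n) ((1 - t) ^ (-a)) := by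
    rw [← Complex.hasSum_ofReal, Complex.ofReal_cpow (by linarith [le_abs_self t])]
    push_cast [inghamWeight, ← Complex.Gamma_ofReal]
    rwa [Complex.cpow_neg, ← one_div]
  simpa [← mul_assoc, mul_div_cancel₀ _ (Gamma_ne_zero ha)] using hreal.mul_left (Gamma a)

lemma tsum_ofReal_one_div_add_mul_inghamWeight {a : ℝ} (ha0 : 0 < a) (ha1 : a < 1) (m : ℕ) :
    ∑' n : ℕ, ENNReal.ofReal (1 / (m + n + a)) * ENNReal.ofReal (inghamWeight a n) =
      ENNReal.ofReal (π / sin (a * π)) * ENNReal.ofReal (inghamWeight a m) := by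
  have hma : 0 < m + a := by positivity
  calc ∑' n : ℕ, ENNReal.ofReal (1 / (m + n + a)) * ENNReal.ofReal (inghamWeight a n)
      = ∑' n, ∫⁻ t in Ioo 0 1,
          ENNReal.ofReal (t ^ (m + a - 1) * (inghamWeight a n * t ^ n)) := by
        congr 1 with n
        rw [← ENNReal.ofReal_mul' (inghamWeight_pos ha0 n).le, one_div_mul_eq_div,
          ← ofReal_div_eq_lintegral_rpow hma (inghamWeight_pos ha0 n).le]
        ring_nf
    _ = ∫⁻ t in Ioo 0 1, ∑' n,
          ENNReal.ofReal (t ^ (m + a - 1) * (inghamWeight a n * t ^ n)) :=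
        (lintegral_tsum fun n => (by fun_prop : Measurable _).aemeasurable).symm
    _ = ∫⁻ t in Ioo 0 1, ENNReal.ofReal (Gamma a) *
          ENNReal.ofReal (t ^ (m + a - 1) * (1 - t) ^ (1 - a - 1)) := by
        refine setLIntegral_congr_fun measurableSet_Ioo fun t ht => ?_
        have hsum := (hasSum_inghamWeight_mul_pow (fun k => by linarith [k.cast_nonneg (α := ℝ)])
          (abs_lt.mpr ⟨by linarith [ht.1], ht.2⟩)).mul_left (t ^ (m + a - 1 : ℝ))
        rw [← ENNReal.ofReal_tsum_of_nonneg (fun n => ?_) hsum.summable, hsum.tsum_eq,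
          ← ENNReal.ofReal_mul (Gamma_pos_of_pos ha0).le]
        · ring_nf
        · have := inghamWeight_pos ha0 n
          have := ht.1
          positivity
    _ = ENNReal.ofReal (π / sin (a * π)) * ENNReal.ofReal (inghamWeight a m) := by
        rw [lintegral_const_mul' _ _ ENNReal.ofReal_ne_top,
          lintegral_rpow_mul_one_sub_rpow hma (by linarith),
          ← ENNReal.ofReal_mul (Gamma_pos_of_pos ha0).le,
          ← ENNReal.ofReal_mul' (inghamWeight_pos ha0 m).le, mul_comm a π,
          ← Gamma_mul_Gamma_one_sub]
        congr 1
        rw [ProbabilityTheory.beta, inghamWeight, show (m : ℝ) + a + (1 - a) = m + 1 by ring,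
          Gamma_nat_eq_factorial]
        ring

theorem ingham_inequality_small (x : ℕ → ℝ) (hx : Summable fun k => (x k) ^ 2)
    (a : ℝ) (ha0 : 0 < a) (ha : a ≤ 1 / 2) :
    ∑' i : ℕ, ∑' j : ℕ, |x i| * |x j| / ((i : ℝ) + (j : ℝ) + a) ≤
      π / Real.sin (a * π) * ∑' k : ℕ, (x k) ^ 2 := by
  have ha1 : a < 1 := by linarith
  have hsin : 0 < sin (a * π) := sin_pos_of_pos_of_lt_pi (by positivity) (by nlinarith [pi_pos])
  have hschur := ENNReal.schur_test (fun i j : ℕ => ENNReal.ofReal (1 / (i + j + a)))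
    (fun i j => by simp only [add_comm (i : ℝ)]) (fun n => (inghamWeight a n).toNNReal)
    (fun n => (toNNReal_pos.mpr (inghamWeight_pos ha0 n)).ne')
    (fun i => (tsum_ofReal_one_div_add_mul_inghamWeight ha0 ha1 i).le) (fun i => (|x i|).toNNReal)
  refine tsum_tsum_le_of_ofReal_le (fun i j => by positivity) (by positivity) ?_
  calc ∑' i : ℕ, ∑' j : ℕ, ENNReal.ofReal (|x i| * |x j| / (i + j + a))
      = ∑' i : ℕ, ∑' j : ℕ, ENNReal.ofReal (1 / (i + j + a)) *
          (ENNReal.ofReal |x i| * ENNReal.ofReal |x j|) := by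
        congr 1 with i
        congr 1 with j
        rw [← ENNReal.ofReal_mul (abs_nonneg _), ← ENNReal.ofReal_mul (by positivity),
          one_div_mul_eq_div]
    _ ≤ ENNReal.ofReal (π / sin (a * π)) * ∑' i, ENNReal.ofReal |x i| ^ 2 := hschur
    _ = ENNReal.ofReal (π / sin (a * π) * ∑' k, x k ^ 2) := by
        rw [ENNReal.ofReal_mul (by positivity),
          ENNReal.ofReal_tsum_of_nonneg (fun k => sq_nonneg _) hx]
        simp_rw [← ENNReal.ofReal_pow (abs_nonneg _), sq_abs]
end

section
/- Let 0 < λ ≤ 1/2 and m ≥ 2. If μ is a real number such that there exists a nonzero x in l^1 with ||x||_{l^1}^{2-m}·Σ_{i_2,...,i_m ≥ 0} x_{i_2}···x_{i_m}/(i+i_2+...+i_m+λ) = μ x_i for all i ≥ 0, then |μ| ≤ π/sin(λπ). -/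
/-!
Taking absolute values in the eigen-equation and bounding the denominator
`i + i₂ + ⋯ + iₘ + λ` from below by `i + i₂ + λ`, the sums over `i₃, …, iₘ` factor out as
`‖x‖₁ ^ (m - 2)`, which cancels the normalisation, so `|μ| |xᵢ| ≤ ∑ⱼ |xⱼ| / (i + j + λ)`.
Multiplying by `|xᵢ|` and summing, `|μ| ‖x‖₂² ≤ ∑ᵢⱼ |xᵢ| |xⱼ| / (i + j + λ)`, and the Hilbert
inequality bounds the right side by `π / sin (π λ) ‖x‖₂²`.

The Hilbert inequality is proved by the Schur test with the weights `qₙ = multichoose λ n`, the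
Taylor coefficients of `(1 - t) ^ (-λ)`: integrating `x ^ (i + λ - 1) ∑ₙ qₙ xⁿ` over `[0, 1]`
gives `∑ⱼ qⱼ / (i + j + λ) ≤ B(i + λ, 1 - λ) = Γ(λ) Γ(1 - λ) qᵢ`, and `Γ(λ) Γ(1 - λ) = π / sin (π λ)`.
-/

open Real Finset

theorem Real.Gamma_add_nat_eq_mul_ascPochhammer {s : ℝ} (hs : 0 < s) (n : ℕ) :
    Gamma (s + n) = Gamma s * (ascPochhammer ℝ n).eval s := by
  induction n with
  | zero => simp
  | succ n ih =>
    rw [Nat.cast_succ, ← add_assoc, Gamma_add_one (by positivity), ih, ascPochhammer_succ_right]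
    simp only [Polynomial.eval_mul, Polynomial.eval_add, Polynomial.eval_X, Polynomial.eval_natCast]
    ring

theorem Ring.factorial_mul_multichoose_eq_ascPochhammer (r : ℝ) (n : ℕ) :
    (n.factorial : ℝ) * Ring.multichoose r n = (ascPochhammer ℝ n).eval r := by
  rw [← nsmul_eq_mul, Ring.factorial_nsmul_multichoose_eq_ascPochhammer,
    Polynomial.ascPochhammer_smeval_eq_eval]

theorem Ring.multichoose_pos {r : ℝ} (hr : 0 < r) (n : ℕ) : 0 < Ring.multichoose r n := by
  have h := ascPochhammer_pos n r hr
  rw [← Ring.factorial_mul_multichoose_eq_ascPochhammer] at h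
  exact pos_of_mul_pos_right h (by positivity)

theorem Real.Gamma_add_nat_eq_multichoose {s : ℝ} (hs : 0 < s) (n : ℕ) :
    Gamma (s + n) = Gamma s * n.factorial * Ring.multichoose s n := by
  rw [Gamma_add_nat_eq_mul_ascPochhammer hs, ← Ring.factorial_mul_multichoose_eq_ascPochhammer,
    mul_assoc]

theorem Real.hasSum_multichoose_mul_pow (r : ℝ) {t : ℝ} (ht : |t| < 1) :
    HasSum (fun n => Ring.multichoose r n * t ^ n) ((1 - t) ^ (-r)) := by
  have hmem : t ∈ Metric.eball (0 : ℝ) 1 := by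
    rw [Metric.mem_eball, edist_zero_right, ← ofReal_norm]
    simpa using ht
  have h := (one_div_one_sub_rpow_hasFPowerSeriesOnBall_zero r).hasSum hmem
  simp only [FormalMultilinearSeries.ofScalars_apply_eq, smul_eq_mul, zero_add, one_div] at h
  simp only [Ring.multichoose_eq]
  rwa [rpow_neg (by linarith [abs_lt.mp ht])]

theorem Real.integral_rpow_mul_one_sub_rpow {u v : ℝ} (hu : 0 < u) (hv : 0 < v) :
    ∫ x in (0 : ℝ)..1, x ^ (u - 1) * (1 - x) ^ (v - 1) = Gamma u * Gamma v / Gamma (u + v) := by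
  have hB := Complex.Gamma_mul_Gamma_eq_betaIntegral (s := u) (t := v) (by simpa) (by simpa)
  have hbeta : Complex.betaIntegral u v = ↑(∫ x in (0 : ℝ)..1, x ^ (u - 1) * (1 - x) ^ (v - 1)) := by
    rw [Complex.betaIntegral, ← intervalIntegral.integral_ofReal]
    refine intervalIntegral.integral_congr fun x hx => ?_
    rw [Set.uIcc_of_le zero_le_one] at hx
    simp only [Complex.ofReal_mul, Complex.ofReal_cpow hx.1, Complex.ofReal_cpow (sub_nonneg.2 hx.2)]
    push_cast
    rfl
  rw [hbeta, ← Complex.ofReal_add, Complex.Gamma_ofReal, Complex.Gamma_ofReal, Complex.Gamma_ofReal,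
    ← Complex.ofReal_mul, ← Complex.ofReal_mul] at hB
  rw [eq_div_iff (Gamma_pos_of_pos (add_pos hu hv)).ne', mul_comm]
  exact_mod_cast hB.symm

theorem integral_rpow_mul_one_sub_rpow_eq_multichoose {lam : ℝ} (h0 : 0 < lam) (h1 : lam < 1)
    (i : ℕ) : ∫ x in (0 : ℝ)..1, x ^ ((i + lam) - 1) * (1 - x) ^ ((1 - lam) - 1)
      = Gamma lam * Gamma (1 - lam) * Ring.multichoose lam i := by
  rw [integral_rpow_mul_one_sub_rpow (by positivity) (by linarith),
    show (i : ℝ) + lam + (1 - lam) = i + 1 by ring, Gamma_nat_eq_factorial, add_comm (i : ℝ),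
    Gamma_add_nat_eq_multichoose h0]
  field_simp

theorem sum_range_multichoose_mul_rpow_le {lam : ℝ} (h0 : 0 < lam) (i N : ℕ) {x : ℝ}
    (hx : x ∈ Set.Ioo (0 : ℝ) 1) :
    ∑ n ∈ range N, Ring.multichoose lam n * x ^ ((i : ℝ) + n + lam - 1)
      ≤ x ^ ((i + lam) - 1) * (1 - x) ^ ((1 - lam) - 1) := by
  have hsplit (n : ℕ) : Ring.multichoose lam n * x ^ ((i : ℝ) + n + lam - 1)
      = x ^ ((i + lam) - 1) * (Ring.multichoose lam n * x ^ n) := by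
    rw [show (i : ℝ) + n + lam - 1 = (i + lam - 1) + n by ring, rpow_add hx.1, rpow_natCast]
    ring
  rw [sum_congr rfl fun n _ => hsplit n, ← mul_sum, show (1 - lam) - 1 = -lam by ring]
  refine mul_le_mul_of_nonneg_left (sum_le_hasSum _ (fun n _ => ?_)
    (hasSum_multichoose_mul_pow lam (abs_lt.2 ⟨by linarith [hx.1], hx.2⟩))) (rpow_nonneg hx.1.le _)
  exact mul_nonneg (Ring.multichoose_pos h0 n).le (pow_nonneg hx.1.le n)

theorem sum_range_inv_mul_multichoose_le {lam : ℝ} (h0 : 0 < lam) (h1 : lam < 1) (i N : ℕ) :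
    ∑ n ∈ range N, ((i : ℝ) + n + lam)⁻¹ * Ring.multichoose lam n
      ≤ Gamma lam * Gamma (1 - lam) * Ring.multichoose lam i := by
  have hexp (n : ℕ) : -1 < (i : ℝ) + n + lam - 1 := by
    have : (0 : ℝ) ≤ i + n := by positivity
    linarith
  have hmoment (n : ℕ) : ((i : ℝ) + n + lam)⁻¹ * Ring.multichoose lam n
      = ∫ x in (0 : ℝ)..1, Ring.multichoose lam n * x ^ ((i : ℝ) + n + lam - 1) := by
    rw [intervalIntegral.integral_const_mul, integral_rpow (.inl (hexp n)), sub_add_cancel,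
      one_rpow, zero_rpow (by linarith [hexp n])]
    ring
  have hbeta := integral_rpow_mul_one_sub_rpow_eq_multichoose h0 h1 i
  have hbeta_int : IntervalIntegrable (fun x => x ^ ((i + lam) - 1) * (1 - x) ^ ((1 - lam) - 1))
      MeasureTheory.volume 0 1 := by
    refine intervalIntegral.intervalIntegrable_of_integral_ne_zero ?_
    rw [hbeta]
    exact (mul_pos (mul_pos (Gamma_pos_of_pos h0) (Gamma_pos_of_pos (by linarith)))
      (Ring.multichoose_pos h0 i)).ne'
  have hterm_int (n : ℕ) : IntervalIntegrable
      (fun x => Ring.multichoose lam n * x ^ ((i : ℝ) + n + lam - 1)) MeasureTheory.volume 0 1 :=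
    (intervalIntegral.intervalIntegrable_rpow' (hexp n)).const_mul _
  calc ∑ n ∈ range N, ((i : ℝ) + n + lam)⁻¹ * Ring.multichoose lam n
      = ∫ x in (0 : ℝ)..1, ∑ n ∈ range N, Ring.multichoose lam n * x ^ ((i : ℝ) + n + lam - 1) := by
        rw [intervalIntegral.integral_finsetSum fun n _ => hterm_int n]
        exact sum_congr rfl fun n _ => hmoment n
    _ ≤ ∫ x in (0 : ℝ)..1, x ^ ((i + lam) - 1) * (1 - x) ^ ((1 - lam) - 1) :=
        intervalIntegral.integral_mono_on_of_le_Ioo zero_le_one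
          (by simpa only [Finset.sum_fn] using IntervalIntegrable.sum (range N) fun n _ =>
            hterm_int n)
          hbeta_int fun x hx => sum_range_multichoose_mul_rpow_le h0 i N hx
    _ = Gamma lam * Gamma (1 - lam) * Ring.multichoose lam i := hbeta

section SchurTest

variable {ι : Type*} {K : ι → ι → ℝ} {q : ι → ℝ} {C : ℝ}

theorem abs_mul_mul_le_schur (a : ι → ℝ) (hK : ∀ i j, 0 ≤ K i j) (hKsymm : ∀ i j, K i j = K j i)
    (hq : ∀ i, 0 < q i) (i j : ι) :
    |a i * K i j * a j|
      ≤ (a i ^ 2 / q i * (K i j * q j) + a j ^ 2 / q j * (K j i * q i)) / 2 := by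
  have hqi := hq i
  have hqj := hq j
  have hamgm : |a i| * |a j| ≤ (a i ^ 2 / q i * q j + a j ^ 2 / q j * q i) / 2 := by
    rw [← sub_nonneg]
    have key : (a i ^ 2 / q i * q j + a j ^ 2 / q j * q i) / 2 - |a i| * |a j|
        = (|a i| * q j - |a j| * q i) ^ 2 / (2 * q i * q j) := by
      field_simp
      rw [← sq_abs (a i), ← sq_abs (a j)]
      ring
    rw [key]
    positivity
  rw [abs_mul, abs_mul, abs_of_nonneg (hK i j), hKsymm j i]
  calc |a i| * K i j * |a j| = |a i| * |a j| * K i j := by ring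
    _ ≤ (a i ^ 2 / q i * q j + a j ^ 2 / q j * q i) / 2 * K i j :=
        mul_le_mul_of_nonneg_right hamgm (hK i j)
    _ = _ := by ring

theorem summable_schur_majorant_and_tsum_le {a : ι → ℝ} (hK : ∀ i j, 0 ≤ K i j)
    (hq : ∀ i, 0 < q i) (hrow : ∀ i, Summable fun j => K i j * q j)
    (hrowC : ∀ i, ∑' j, K i j * q j ≤ C * q i) (ha : Summable fun i => a i ^ 2) :
    Summable (fun p : ι × ι => a p.1 ^ 2 / q p.1 * (K p.1 p.2 * q p.2)) ∧
      ∑' p : ι × ι, a p.1 ^ 2 / q p.1 * (K p.1 p.2 * q p.2) ≤ C * ∑' i, a i ^ 2 := by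
  have hnonneg : ∀ p : ι × ι, 0 ≤ a p.1 ^ 2 / q p.1 * (K p.1 p.2 * q p.2) := fun p =>
    mul_nonneg (div_nonneg (sq_nonneg _) (hq _).le) (mul_nonneg (hK _ _) (hq _).le)
  have hrow_sum (i : ι) : ∑' j, a i ^ 2 / q i * (K i j * q j) ≤ C * a i ^ 2 := by
    rw [tsum_mul_left]
    calc a i ^ 2 / q i * ∑' j, K i j * q j ≤ a i ^ 2 / q i * (C * q i) :=
          mul_le_mul_of_nonneg_left (hrowC i) (div_nonneg (sq_nonneg _) (hq i).le)
      _ = C * a i ^ 2 := by field_simp [(hq i).ne']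
  have hsummable : Summable (fun p : ι × ι => a p.1 ^ 2 / q p.1 * (K p.1 p.2 * q p.2)) :=
    (summable_prod_of_nonneg hnonneg).2 ⟨fun i => (hrow i).mul_left (a i ^ 2 / q i),
      (ha.mul_left C).of_nonneg_of_le (fun i => tsum_nonneg fun j => hnonneg (i, j)) hrow_sum⟩
  refine ⟨hsummable, ?_⟩
  rw [hsummable.tsum_prod' fun i => (hrow i).mul_left (a i ^ 2 / q i), ← tsum_mul_left]
  exact hsummable.prod.tsum_le_tsum hrow_sum (ha.mul_left C)

theorem summable_and_tsum_le_of_schur {a : ι → ℝ} (hK : ∀ i j, 0 ≤ K i j)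
    (hKsymm : ∀ i j, K i j = K j i) (hq : ∀ i, 0 < q i) (hrow : ∀ i, Summable fun j => K i j * q j)
    (hrowC : ∀ i, ∑' j, K i j * q j ≤ C * q i) (ha : Summable fun i => a i ^ 2) :
    Summable (fun p : ι × ι => a p.1 * K p.1 p.2 * a p.2) ∧
      ∑' p : ι × ι, a p.1 * K p.1 p.2 * a p.2 ≤ C * ∑' i, a i ^ 2 := by
  obtain ⟨hT, hTle⟩ := summable_schur_majorant_and_tsum_le hK hq hrow hrowC ha
  have hTswap : Summable fun p : ι × ι => a p.2 ^ 2 / q p.2 * (K p.2 p.1 * q p.1) :=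
    (Equiv.prodComm ι ι).summable_iff.2 hT
  have hswap_eq : ∑' p : ι × ι, a p.2 ^ 2 / q p.2 * (K p.2 p.1 * q p.1)
      = ∑' p : ι × ι, a p.1 ^ 2 / q p.1 * (K p.1 p.2 * q p.2) :=
    (Equiv.prodComm ι ι).tsum_eq fun p => a p.1 ^ 2 / q p.1 * (K p.1 p.2 * q p.2)
  have hmaj := (hT.add hTswap).div_const 2
  have hbound (p : ι × ι) : ‖a p.1 * K p.1 p.2 * a p.2‖
      ≤ (a p.1 ^ 2 / q p.1 * (K p.1 p.2 * q p.2) + a p.2 ^ 2 / q p.2 * (K p.2 p.1 * q p.1)) / 2 :=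
    abs_mul_mul_le_schur a hK hKsymm hq p.1 p.2
  have hsummable := hmaj.of_norm_bounded hbound
  refine ⟨hsummable, ?_⟩
  calc ∑' p : ι × ι, a p.1 * K p.1 p.2 * a p.2
      ≤ ∑' p : ι × ι, (a p.1 ^ 2 / q p.1 * (K p.1 p.2 * q p.2)
          + a p.2 ^ 2 / q p.2 * (K p.2 p.1 * q p.1)) / 2 :=
        hsummable.tsum_le_tsum (fun p => (le_abs_self _).trans (hbound p)) hmaj
    _ = ∑' p : ι × ι, a p.1 ^ 2 / q p.1 * (K p.1 p.2 * q p.2) := by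
        rw [tsum_div_const, hT.tsum_add hTswap, hswap_eq]
        ring
    _ ≤ C * ∑' i, a i ^ 2 := hTle

end SchurTest

theorem summable_and_tsum_le_hilbert {lam : ℝ} (h0 : 0 < lam) (h1 : lam < 1) {a : ℕ → ℝ}
    (ha : Summable fun n => a n ^ 2) :
    Summable (fun p : ℕ × ℕ => a p.1 * ((p.1 : ℝ) + p.2 + lam)⁻¹ * a p.2) ∧
      ∑' p : ℕ × ℕ, a p.1 * ((p.1 : ℝ) + p.2 + lam)⁻¹ * a p.2 ≤ π / sin (π * lam) * ∑' n, a n ^ 2 := by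
  have hK (i j : ℕ) : 0 ≤ ((i : ℝ) + j + lam)⁻¹ := by positivity
  have hKsymm (i j : ℕ) : ((i : ℝ) + j + lam)⁻¹ = ((j : ℝ) + i + lam)⁻¹ := by rw [add_comm (i : ℝ)]
  have hrow_nonneg (i j : ℕ) : 0 ≤ ((i : ℝ) + j + lam)⁻¹ * Ring.multichoose lam j :=
    mul_nonneg (hK i j) (Ring.multichoose_pos h0 j).le
  rw [← Gamma_mul_Gamma_one_sub]
  exact summable_and_tsum_le_of_schur hK hKsymm (Ring.multichoose_pos h0)
    (fun i => summable_of_sum_range_le (hrow_nonneg i) (sum_range_inv_mul_multichoose_le h0 h1 i))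
    (fun i => Real.tsum_le_of_sum_range_le (hrow_nonneg i) (sum_range_inv_mul_multichoose_le h0 h1 i))
    ha

section ProductSeries

variable {α : Type*} {a : α → ℝ}

theorem hasSum_mul_prod_fin_succ {b : α → ℝ} (ha : ∀ n, 0 ≤ a n) (hb : ∀ n, 0 ≤ b n)
    {A B : ℝ} {k : ℕ} (hA : HasSum (fun t : Fin k → α => ∏ j, a (t j)) A) (hB : HasSum b B) :
    HasSum (fun t : Fin (k + 1) → α => b (t 0) * ∏ j : Fin k, a (t j.succ)) (B * A) := by
  have hprod : HasSum (fun p : α × (Fin k → α) => b p.1 * ∏ j, a (p.2 j)) (B * A) :=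
    HasSum.mul (f := b) (g := fun t : Fin k → α => ∏ j, a (t j)) hB hA
      (Summable.mul_of_nonneg (f := b) (g := fun t : Fin k → α => ∏ j, a (t j)) hB.summable
        hA.summable hb fun t => prod_nonneg fun j _ => ha (t j))
  rw [← (Fin.consEquiv fun _ => α).hasSum_iff]
  simpa [Function.comp_def, Fin.consEquiv] using hprod

theorem hasSum_prod_fin_pi (ha : ∀ n, 0 ≤ a n) (hs : Summable a) (k : ℕ) :
    HasSum (fun t : Fin k → α => ∏ j, a (t j)) ((∑' n, a n) ^ k) := by
  induction k with
  | zero => simp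
  | succ k ih =>
    simpa only [Fin.prod_univ_succ, pow_succ'] using hasSum_mul_prod_fin_succ ha ha ih hs.hasSum

end ProductSeries

theorem summable_and_tsum_prod_div_le {a : ℕ → ℝ} (ha : ∀ n, 0 ≤ a n) (hs : Summable a)
    {c : ℝ} (hc : 0 < c) (k : ℕ) :
    Summable (fun t : Fin (k + 1) → ℕ => (∏ j, a (t j)) / (c + ∑ j, (t j : ℝ))) ∧
      ∑' t : Fin (k + 1) → ℕ, (∏ j, a (t j)) / (c + ∑ j, (t j : ℝ))
        ≤ (∑' n, a n / (c + n)) * (∑' n, a n) ^ k := by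
  have hb : ∀ n : ℕ, 0 ≤ a n / (c + n) := fun n => div_nonneg (ha n) (by positivity)
  have hbs : Summable fun n : ℕ => a n / (c + n) :=
    (hs.div_const c).of_nonneg_of_le hb fun n =>
      div_le_div_of_nonneg_left (ha n) hc (le_add_of_nonneg_right n.cast_nonneg)
  have hmajorant := hasSum_mul_prod_fin_succ ha hb (hasSum_prod_fin_pi ha hs k) hbs.hasSum
  have hnonneg (t : Fin (k + 1) → ℕ) : 0 ≤ (∏ j, a (t j)) / (c + ∑ j, (t j : ℝ)) :=
    div_nonneg (prod_nonneg fun j _ => ha (t j)) (by positivity)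
  have hle (t : Fin (k + 1) → ℕ) : (∏ j, a (t j)) / (c + ∑ j, (t j : ℝ))
      ≤ a (t 0) / (c + t 0) * ∏ j : Fin k, a (t j.succ) := by
    have hsum : (t 0 : ℝ) ≤ ∑ j, (t j : ℝ) := by
      rw [Fin.sum_univ_succ]
      exact le_add_of_nonneg_right (sum_nonneg fun j _ => (t j.succ).cast_nonneg)
    rw [Fin.prod_univ_succ, div_mul_eq_mul_div, mul_comm (a (t 0))]
    exact div_le_div_of_nonneg_left (mul_nonneg (prod_nonneg fun j _ => ha _) (ha _))
      (by positivity) (by linarith)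
  have hsummable := hmajorant.summable.of_nonneg_of_le hnonneg hle
  exact ⟨hsummable, hasSum_le hle hsummable.hasSum hmajorant⟩

theorem abs_mul_le_tsum_of_eigen {x : ℕ → ℝ} (hx : Summable fun n => |x n|) {lam mu : ℝ}
    (h0 : 0 < lam) {k i : ℕ}
    (heig : (∑' n, |x n|) ^ (-(k : ℤ)) *
      ∑' t : Fin (k + 1) → ℕ, (∏ j, x (t j)) / ((i : ℝ) + ∑ j, (t j : ℝ) + lam) = mu * x i) :
    |mu| * |x i| ≤ ∑' n : ℕ, ((i : ℝ) + n + lam)⁻¹ * |x n| := by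
  set A := ∑' n, |x n|
  have hA : 0 ≤ A := tsum_nonneg fun n => abs_nonneg _
  obtain ⟨hsummable, hle⟩ := summable_and_tsum_prod_div_le (fun n => abs_nonneg (x n)) hx
    (c := i + lam) (by positivity) k
  have hnorm (t : Fin (k + 1) → ℕ) : ‖(∏ j, x (t j)) / ((i : ℝ) + ∑ j, (t j : ℝ) + lam)‖
      = (∏ j, |x (t j)|) / ((i : ℝ) + lam + ∑ j, (t j : ℝ)) := by
    rw [norm_div, norm_prod, add_right_comm]
    simp only [Real.norm_eq_abs]
    rw [abs_of_pos (by positivity)]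
  have hkernel : ∑' n : ℕ, |x n| / ((i : ℝ) + lam + n) = ∑' n : ℕ, ((i : ℝ) + n + lam)⁻¹ * |x n| :=
    tsum_congr fun n => by rw [add_right_comm, div_eq_inv_mul]
  have habs : |∑' t : Fin (k + 1) → ℕ, (∏ j, x (t j)) / ((i : ℝ) + ∑ j, (t j : ℝ) + lam)|
      ≤ (∑' n : ℕ, ((i : ℝ) + n + lam)⁻¹ * |x n|) * A ^ k := by
    refine (norm_tsum_le_tsum_norm (hsummable.congr fun t => (hnorm t).symm)).trans ?_
    rw [tsum_congr hnorm, ← hkernel]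
    exact hle
  calc |mu| * |x i| = A ^ (-(k : ℤ)) * |∑' t : Fin (k + 1) → ℕ,
        (∏ j, x (t j)) / ((i : ℝ) + ∑ j, (t j : ℝ) + lam)| := by
        rw [← abs_mul, ← heig, abs_mul, abs_of_nonneg (zpow_nonneg hA _)]
    _ ≤ A ^ (-(k : ℤ)) * ((∑' n : ℕ, ((i : ℝ) + n + lam)⁻¹ * |x n|) * A ^ k) :=
        mul_le_mul_of_nonneg_left habs (zpow_nonneg hA _)
    _ = ((A ^ k)⁻¹ * A ^ k) * ∑' n : ℕ, ((i : ℝ) + n + lam)⁻¹ * |x n| := by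
        rw [zpow_neg, zpow_natCast]
        ring
    _ ≤ ∑' n : ℕ, ((i : ℝ) + n + lam)⁻¹ * |x n| :=
        mul_le_of_le_one_left (tsum_nonneg fun n => by positivity) inv_mul_le_one

theorem summable_sq_of_summable_abs {ι : Type*} {x : ι → ℝ} (hx : Summable fun n => |x n|) :
    Summable fun n => x n ^ 2 :=
  (hx.mul_left (∑' n, |x n|)).of_nonneg_of_le (fun n => sq_nonneg _) fun n => by
    rw [← sq_abs, sq]
    exact mul_le_mul_of_nonneg_right (hx.le_tsum n fun j _ => abs_nonneg _) (abs_nonneg _)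

theorem infinite_Z1_eigenvalue_bound_small_lambda (m : ℕ) (hm : 2 ≤ m)
    (lam : ℝ) (h0 : 0 < lam) (h1 : lam ≤ 1 / 2) (mu : ℝ) (x : ℕ → ℝ)
    (hx : Summable fun i => |x i|) (hx0 : x ≠ 0)
    (heig : ∀ i : ℕ,
      (∑' k, |x k|) ^ ((2 : ℤ) - m) *
          ∑' t : Fin (m - 1) → ℕ,
            (∏ j, x (t j)) / ((i : ℝ) + (∑ j, ((t j : ℕ) : ℝ)) + lam) = mu * x i) :
    |mu| ≤ π / Real.sin (lam * π) := by
  obtain ⟨k, hk⟩ : ∃ k, m - 1 = k + 1 := ⟨m - 2, by omega⟩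
  have hsq := summable_sq_of_summable_abs hx
  obtain ⟨hH, hHle⟩ := summable_and_tsum_le_hilbert h0 (by linarith) (a := fun n => |x n|)
    (by simpa only [sq_abs] using hsq)
  have hrow (i : ℕ) : |mu| * x i ^ 2 ≤ ∑' j : ℕ, |x i| * ((i : ℝ) + j + lam)⁻¹ * |x j| := by
    have h := heig i
    rw [hk, show (2 : ℤ) - m = -(k : ℤ) by omega] at h
    calc |mu| * x i ^ 2 = |x i| * (|mu| * |x i|) := by rw [← sq_abs]; ring
      _ ≤ |x i| * ∑' j : ℕ, ((i : ℝ) + j + lam)⁻¹ * |x j| :=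
          mul_le_mul_of_nonneg_left (abs_mul_le_tsum_of_eigen hx h0 h) (abs_nonneg _)
      _ = _ := by simp only [← tsum_mul_left, mul_assoc]
  have hmain : |mu| * ∑' n, x n ^ 2 ≤ π / sin (π * lam) * ∑' n, x n ^ 2 := calc
    |mu| * ∑' n, x n ^ 2 = ∑' i, |mu| * x i ^ 2 := tsum_mul_left.symm
    _ ≤ ∑' i : ℕ, ∑' j : ℕ, |x i| * ((i : ℝ) + j + lam)⁻¹ * |x j| :=
        (hsq.mul_left _).tsum_le_tsum hrow hH.prod
    _ = ∑' p : ℕ × ℕ, |x p.1| * ((p.1 : ℝ) + p.2 + lam)⁻¹ * |x p.2| :=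
        (hH.tsum_prod' hH.prod_factor).symm
    _ ≤ π / sin (π * lam) * ∑' n, x n ^ 2 := by simpa only [sq_abs] using hHle
  obtain ⟨i, hi⟩ := Function.ne_iff.1 hx0
  rw [mul_comm lam]
  exact le_of_mul_le_mul_right hmain (hsq.tsum_pos (fun n => sq_nonneg _) i (pow_two_pos_of_ne_zero hi))
end

section
/- Let m ≥ 2. If μ is a real number such that there exists a nonzero x in l^1 with ||x||_{l^1}^{2-m}·Σ_{i_2,...,i_m ≥ 0} x_{i_2}···x_{i_m}/(i+i_2+...+i_m+1) = μ x_i for all i ≥ 0, then |μ| ≤ π. -/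
/-
Multiplying the eigen-equation by ‖x‖₁^(m-2) and bounding the denominator
`i + t₀ + ⋯ + t_{m-2} + 1` below by `i + t₀ + 1`, the sums over `t₁, …, t_{m-2}` factor out as
`‖x‖₁^(m-2)`, so `|μ| |x i| ≤ ∑ₖ |x k| / (i + k + 1)`: `|x|` is a sub-eigenvector of the Hilbert
matrix. Schur's test with the weights `wᵢ = (i + 1/2)^(-1/2)` then gives `|μ| ≤ π`: since
`y ↦ 1 / ((c + y) √y)` is convex, each term of `∑ᵢ wᵢ / (i + k + 1)` is at most the integral of
this function over `[i, i + 1]` with `c = k + 1/2`, and `∫₀^∞ dy / ((c + y) √y) = π / √c = π wₖ`.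
-/

open Real Set
open scoped ENNReal

namespace ENNReal

theorem tsum_fin_cons_mul_prod {α : Type*} (f g : α → ℝ≥0∞) (n : ℕ) :
    ∑' t : Fin (n + 1) → α, f (t 0) * ∏ j : Fin n, g (t j.succ) =
      (∑' a, f a) * ∑' s : Fin n → α, ∏ j, g (s j) := by
  rw [← (Fin.consEquiv fun _ => α).tsum_eq, ENNReal.tsum_prod', ← ENNReal.tsum_mul_right]
  simp [Fin.consEquiv, ENNReal.tsum_mul_left]

theorem tsum_fin_pi_prod {α : Type*} (g : α → ℝ≥0∞) (n : ℕ) :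
    ∑' s : Fin n → α, ∏ j, g (s j) = (∑' a, g a) ^ n := by
  induction n with
  | zero => simp
  | succ n ih =>
    simp_rw [Fin.prod_univ_succ]
    rw [tsum_fin_cons_mul_prod, ih, pow_succ']

theorem schur_test_s16 {ι κ : Type*} {K : ι → κ → ℝ≥0∞} {w : ι → ℝ≥0∞} {v : κ → ℝ≥0∞}
    {C : ℝ≥0∞} (hK : ∀ k, ∑' i, w i * K i k ≤ C * v k) (a : κ → ℝ≥0∞) :
    ∑' i, w i * ∑' k, K i k * a k ≤ C * ∑' k, v k * a k := by
  calc ∑' i, w i * ∑' k, K i k * a k = ∑' k, (∑' i, w i * K i k) * a k := by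
        simp_rw [← ENNReal.tsum_mul_left, ← ENNReal.tsum_mul_right, mul_assoc]
        exact ENNReal.tsum_comm
    _ ≤ ∑' k, C * v k * a k := ENNReal.tsum_le_tsum fun k => mul_le_mul_left (hK k) _
    _ = C * ∑' k, v k * a k := by simp_rw [← ENNReal.tsum_mul_left, mul_assoc]

end ENNReal

/-- The left half of the Hermite–Hadamard inequality, phrased through an antiderivative. -/
theorem ConvexOn.two_mul_mul_le_sub_of_hasDerivAt {f F : ℝ → ℝ} {m h : ℝ} (hh : 0 ≤ h)
    (hF : ContinuousOn F (Icc (m - h) (m + h)))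
    (hFf : ∀ y ∈ Ioo (m - h) (m + h), HasDerivAt F (f y) y)
    (hf : ConvexOn ℝ (Ioo (m - h) (m + h)) f) :
    2 * h * f m ≤ F (m + h) - F (m - h) := by
  set φ : ℝ → ℝ := fun s => F (m + s) - F (m - s) - 2 * s * f m
  have hφ : MonotoneOn φ (Icc 0 h) := by
    refine monotoneOn_of_hasDerivWithinAt_nonneg (f' := fun s => f (m + s) + f (m - s) - 2 * f m)
      (convex_Icc 0 h) ?_ (fun s hs => ?_) (fun s hs => ?_)
    · refine ((hF.comp (by fun_prop) fun s hs => ?_).sub (hF.comp (by fun_prop) fun s hs => ?_)).sub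
        (by fun_prop) <;> constructor <;> linarith [hs.1, hs.2]
    all_goals
      rw [interior_Icc] at hs
      have hplus : m + s ∈ Ioo (m - h) (m + h) := ⟨by linarith [hs.1], by linarith [hs.2]⟩
      have hminus : m - s ∈ Ioo (m - h) (m + h) := ⟨by linarith [hs.2], by linarith [hs.1]⟩
    · rw [interior_Icc]
      have := (((hFf _ hplus).comp s ((hasDerivAt_id s).const_add m)).sub
        ((hFf _ hminus).comp s ((hasDerivAt_id s).const_sub m))).sub
        (((hasDerivAt_id s).const_mul 2).mul_const (f m))
      exact (this.congr_deriv (by ring)).hasDerivWithinAt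
    · have := hf.2 hplus hminus (by norm_num : (0 : ℝ) ≤ 1 / 2) (by norm_num : (0 : ℝ) ≤ 1 / 2)
        (by norm_num)
      rw [smul_eq_mul, smul_eq_mul, smul_eq_mul, smul_eq_mul,
        show 1 / 2 * (m + s) + 1 / 2 * (m - s) = m by ring] at this
      linarith
  have := hφ ⟨le_rfl, hh⟩ ⟨hh, le_rfl⟩ hh
  simp only [φ, add_zero, sub_zero, sub_self, mul_zero, zero_mul] at this
  linarith

theorem hasDerivAt_arctan_sqrt_div {c y : ℝ} (hc : 0 < c) (hy : 0 < y) :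
    HasDerivAt (fun y => 2 / √c * arctan (√y / √c)) ((c + y) * √y)⁻¹ y := by
  have h := (((hasDerivAt_sqrt hy.ne').div_const √c).arctan).const_mul (2 / √c)
  refine h.congr_deriv ?_
  have hsc : 0 < √c := sqrt_pos.2 hc
  have hsy : 0 < √y := sqrt_pos.2 hy
  rw [div_pow, sq_sqrt hy.le, sq_sqrt hc.le]
  field_simp
  exact (sq_sqrt hc.le).symm

theorem convexOn_inv_add_mul_sqrt {c : ℝ} (hc : 0 ≤ c) :
    ConvexOn ℝ (Ioi 0) fun y => ((c + y) * √y)⁻¹ := by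
  have hshift : ConvexOn ℝ (Ioi 0) fun y : ℝ => (c + y)⁻¹ := by
    refine (((convexOn_zpow (𝕜 := ℝ) (-1)).translate_right c).subset
      (fun y (hy : 0 < y) => show 0 < c + y by linarith) (convex_Ioi 0)).congr fun y _ => ?_
    simp
  have hsqrt : ConvexOn ℝ (Ioi 0) fun y : ℝ => (√y)⁻¹ := by
    have himage : sqrt '' Ioi 0 = Ioi 0 := by
      ext z
      exact ⟨fun ⟨y, hy, hz⟩ => hz ▸ sqrt_pos.2 hy,
        fun hz => ⟨z ^ 2, mem_Ioi.2 (pow_pos hz 2), sqrt_sq hz.le⟩⟩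
    refine ConvexOn.comp_concaveOn (g := fun z : ℝ => z⁻¹) ?_
      (strictConcaveOn_sqrt.concaveOn.subset Ioi_subset_Ici_self (convex_Ioi 0)) ?_ <;>
      rw [himage]
    · simpa using convexOn_zpow (𝕜 := ℝ) (-1)
    · exact fun u hu v _ huv => inv_anti₀ hu huv
  have := hshift.mul hsqrt (fun y hy => inv_nonneg.2 (by linarith [mem_Ioi.1 hy]))
    (fun y _ => inv_nonneg.2 (sqrt_nonneg y))
    (AntitoneOn.monovaryOn
      (fun u hu v _ huv => inv_anti₀ (by linarith [mem_Ioi.1 hu]) (by linarith))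
      (fun u hu v _ huv => inv_anti₀ (sqrt_pos.2 hu) (sqrt_le_sqrt huv)))
  exact this.congr fun y _ => (mul_inv _ _).symm

theorem sum_range_inv_add_mul_sqrt_le {c : ℝ} (hc : 0 < c) (N : ℕ) :
    ∑ i ∈ Finset.range N, ((c + (i + 1 / 2)) * √(i + 1 / 2))⁻¹ ≤ π / √c := by
  set F : ℝ → ℝ := fun y => 2 / √c * arctan (√y / √c)
  have hstep (i : ℕ) : ((c + (i + 1 / 2)) * √(i + 1 / 2))⁻¹ ≤ F (i + 1) - F i := by
    have hi : (0 : ℝ) ≤ i := i.cast_nonneg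
    have := ConvexOn.two_mul_mul_le_sub_of_hasDerivAt (m := i + 1 / 2) (h := 1 / 2) (F := F)
      (by norm_num) (by fun_prop)
      (fun y hy => hasDerivAt_arctan_sqrt_div hc (by linarith [hy.1, hy.2]))
      ((convexOn_inv_add_mul_sqrt hc.le).subset (fun y hy => mem_Ioi.2 (by linarith [hy.1]))
        (convex_Ioo _ _))
    rwa [show (i : ℝ) + 1 / 2 + 1 / 2 = i + 1 by ring, show (i : ℝ) + 1 / 2 - 1 / 2 = i by ring,
      show (2 : ℝ) * (1 / 2) = 1 by norm_num, one_mul] at this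
  calc _ ≤ ∑ i ∈ Finset.range N, (F (i + 1) - F i) := Finset.sum_le_sum fun i _ => hstep i
    _ = F N := by simpa [F] using Finset.sum_range_sub (fun i : ℕ => F i) N
    _ ≤ 2 / √c * (π / 2) := by simp only [F]; gcongr; exact (arctan_lt_pi_div_two _).le
    _ = π / √c := by ring

noncomputable def hilbertKernel (i k : ℕ) : ℝ≥0∞ := ENNReal.ofReal ((i : ℝ) + k + 1)⁻¹
noncomputable def hilbertWeight (i : ℕ) : ℝ≥0∞ := ENNReal.ofReal (√((i : ℝ) + 1 / 2))⁻¹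

theorem tsum_hilbertWeight_mul_hilbertKernel_le (k : ℕ) :
    ∑' i, hilbertWeight i * hilbertKernel i k ≤ ENNReal.ofReal π * hilbertWeight k := by
  have hterm (i : ℕ) : hilbertWeight i * hilbertKernel i k =
      ENNReal.ofReal (((k + 1 / 2 + (i + 1 / 2)) * √(i + 1 / 2))⁻¹) := by
    rw [hilbertWeight, hilbertKernel, ← ENNReal.ofReal_mul (by positivity), ← mul_inv, mul_comm]
    ring_nf
  rw [hilbertWeight, ← ENNReal.ofReal_mul pi_pos.le, ← div_eq_mul_inv]
  refine ENNReal.tsum_le_of_sum_range_le fun N => ?_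
  simp_rw [hterm]
  rw [← ENNReal.ofReal_sum_of_nonneg fun i _ => by positivity]
  exact ENNReal.ofReal_le_ofReal (sum_range_inv_add_mul_sqrt_le (by positivity) N)

theorem le_pi_of_le_tsum_hilbertKernel {a : ℕ → ℝ≥0∞} (ha : ∑' k, a k ≠ ∞) (ha0 : a ≠ 0)
    {c : ℝ≥0∞} (h : ∀ i, c * a i ≤ ∑' k, hilbertKernel i k * a k) : c ≤ ENNReal.ofReal π := by
  set T := ∑' k, hilbertWeight k * a k
  have hT : T ≠ ∞ := by
    have hw₀ : hilbertWeight 0 ≠ ∞ := ENNReal.ofReal_ne_top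
    refine ne_top_of_le_ne_top (ENNReal.mul_ne_top hw₀ ha) ?_
    rw [← ENNReal.tsum_mul_left]
    refine ENNReal.tsum_le_tsum fun k => mul_le_mul_left ?_ _
    exact ENNReal.ofReal_le_ofReal <| inv_anti₀ (by positivity) <| sqrt_le_sqrt <| by simp
  have hT0 : T ≠ 0 := by
    obtain ⟨k, hk⟩ := Function.ne_iff.1 ha0
    have hwk : hilbertWeight k ≠ 0 := by simp only [hilbertWeight]; positivity
    exact fun hzero => mul_ne_zero hwk hk (ENNReal.tsum_eq_zero.1 hzero k)
  refine (ENNReal.mul_le_mul_iff_left hT0 hT).1 ?_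
  calc c * T = ∑' i, hilbertWeight i * (c * a i) := by
        rw [← ENNReal.tsum_mul_left]
        exact tsum_congr fun i => by ring
    _ ≤ ∑' i, hilbertWeight i * ∑' k, hilbertKernel i k * a k :=
        ENNReal.tsum_le_tsum fun i => mul_le_mul_right (h i) _
    _ ≤ ENNReal.ofReal π * T := ENNReal.schur_test_s16 tsum_hilbertWeight_mul_hilbertKernel_le a

theorem enorm_prod_div_le (x : ℕ → ℝ) (n i : ℕ) (t : Fin (n + 1) → ℕ) :
    ‖(∏ j, x (t j)) / ((i : ℝ) + ∑ j, (t j : ℝ) + 1)‖ₑ ≤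
      hilbertKernel i (t 0) * ‖x (t 0)‖ₑ * ∏ j : Fin n, ‖x (t j.succ)‖ₑ := by
  have hle : (t 0 : ℝ) ≤ ∑ j, (t j : ℝ) :=
    Finset.single_le_sum (fun j _ => Nat.cast_nonneg (t j)) (Finset.mem_univ 0)
  rw [div_eq_mul_inv, enorm_mul, enorm_eq_nnnorm, nnnorm_prod, ENNReal.ofNNReal_finsetProd,
    Fin.prod_univ_succ, mul_comm, ← mul_assoc, Real.enorm_of_nonneg (by positivity), hilbertKernel]
  simp only [← enorm_eq_nnnorm]
  gcongr

theorem enorm_tsum_hilbert_le (x : ℕ → ℝ) (n i : ℕ) :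
    ‖∑' t : Fin (n + 1) → ℕ, (∏ j, x (t j)) / ((i : ℝ) + ∑ j, (t j : ℝ) + 1)‖ₑ ≤
      (∑' k, hilbertKernel i k * ‖x k‖ₑ) * (∑' k, ‖x k‖ₑ) ^ n := by
  calc _ ≤ ∑' t : Fin (n + 1) → ℕ, ‖(∏ j, x (t j)) / ((i : ℝ) + ∑ j, (t j : ℝ) + 1)‖ₑ :=
        enorm_tsum_le_tsum_enorm
    _ ≤ ∑' t : Fin (n + 1) → ℕ, hilbertKernel i (t 0) * ‖x (t 0)‖ₑ * ∏ j : Fin n, ‖x (t j.succ)‖ₑ :=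
        ENNReal.tsum_le_tsum fun t => enorm_prod_div_le x n i t
    _ = _ := by
      rw [← ENNReal.tsum_fin_pi_prod]
      exact ENNReal.tsum_fin_cons_mul_prod (fun k => hilbertKernel i k * ‖x k‖ₑ)
        (fun k => ‖x k‖ₑ) n

theorem enorm_tsum_abs {ι : Type*} {x : ι → ℝ} (hx : Summable fun i => |x i|) :
    ‖∑' i, |x i|‖ₑ = ∑' i, ‖x i‖ₑ := by
  rw [Real.enorm_of_nonneg (tsum_nonneg fun i => abs_nonneg _),
    ENNReal.ofReal_tsum_of_nonneg (fun i => abs_nonneg _) hx]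
  simp only [Real.enorm_eq_ofReal_abs]

theorem infinite_Z1_eigenvalue_bound_lambda_one (m : ℕ) (hm : 2 ≤ m)
    (mu : ℝ) (x : ℕ → ℝ)
    (hx : Summable fun i => |x i|) (hx0 : x ≠ 0)
    (heig : ∀ i : ℕ,
      (∑' k, |x k|) ^ ((2 : ℤ) - m) *
          ∑' t : Fin (m - 1) → ℕ,
            (∏ j, x (t j)) / ((i : ℝ) + (∑ j, ((t j : ℕ) : ℝ)) + 1) = mu * x i) :
    |mu| ≤ π := by
  obtain ⟨n, rfl⟩ : ∃ n, m = n + 2 := ⟨m - 2, by omega⟩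
  obtain ⟨k₀, hk₀⟩ := Function.ne_iff.1 hx0
  have hS := enorm_tsum_abs hx
  have hS_ne_top : ∑' k, ‖x k‖ₑ ≠ ∞ := hS ▸ enorm_ne_top
  have hS_ne_zero : ∑' k, ‖x k‖ₑ ≠ 0 :=
    fun h => hk₀ (enorm_eq_zero.1 (ENNReal.tsum_eq_zero.1 h k₀))
  have key (i : ℕ) : ‖mu‖ₑ * ‖x i‖ₑ ≤ ∑' k, hilbertKernel i k * ‖x k‖ₑ := by
    have heig' : ∑' t : Fin (n + 1) → ℕ, (∏ j, x (t j)) / ((i : ℝ) + ∑ j, (t j : ℝ) + 1) =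
        mu * x i * (∑' k, |x k|) ^ n := by
      have hS0 : ∑' k, |x k| ≠ 0 := fun h => hS_ne_zero (by rw [← hS, h, enorm_zero])
      rw [← heig i]
      push_cast
      rw [show (2 : ℤ) - (n + 2) = -n by ring, zpow_neg, zpow_natCast]
      field_simp
      rfl -- `Fin (n + 2 - 1)` is `Fin (n + 1)` up to unfolding
    refine (ENNReal.mul_le_mul_iff_left (pow_ne_zero n hS_ne_zero)
      (ENNReal.pow_ne_top hS_ne_top)).1 ?_
    calc ‖mu‖ₑ * ‖x i‖ₑ * (∑' k, ‖x k‖ₑ) ^ n = _ := by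
          rw [← hS, ← enorm_pow, ← enorm_mul, ← enorm_mul, ← heig']
      _ ≤ _ := enorm_tsum_hilbert_le x n i
  have hμ := le_pi_of_le_tsum_hilbertKernel hS_ne_top
    (Function.ne_iff.2 ⟨k₀, enorm_ne_zero.2 hk₀⟩) key
  rwa [Real.enorm_eq_ofReal_abs, ENNReal.ofReal_le_ofReal_iff pi_pos.le] at hμ
end
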